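/- arXiv:1409.2077 — 3 statements merged into one kernel-verified Lean document; each statement's English description precedes it below -/
import Mathlib

section
/- Let q > 2 be a prime power, F_q the finite field with q elements, f a nonconstant monic polynomial in F_q[x], and R = F_q[x]/(f). For a, b ∈ R, the following are equivalent: a H b in the Green's congruence of the multiplicative monoid of R, if and only if St_{U}(a) = St_{U}(b), where U is the group of units of R and St_U(c) = {u ∈ U : u·c = c}. -/
/-!
In any commutative monoid `a H b` just says `a ∣ b ∧ b ∣ a`, which forces equal stabilizers.
Conversely, `St_U(a) = U ∩ (1 + Ann a)` determines `Ann a`: every residue field of the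
semilocal ring `R` contains `F_q`, so has more than two elements, and by the Chinese remainder
theorem each `x` admits an `s` with `1 + xs` and `1 + x(s + 1)` both units; `x` is their
difference. Finally `Ann (A mod f)` is generated by `f / gcd(A, f)`, so by Bézout
`Ann a ⊆ Ann b` gives `a ∣ b`.
-/

open Polynomial

/-- Green's preorder on the multiplicative monoid of a commutative ring:
`a ≤_H b` iff `a = b` or `a = b * c` for some `c`. -/
def GreenLe {S : Type*} [CommMonoid S] (a b : S) : Prop :=
  a = b ∨ ∃ c : S, a = b * c

/-- Green's congruence: `a H b` iff `a ≤_H b` and `b ≤_H a`. -/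
def GreenEq {S : Type*} [CommMonoid S] (a b : S) : Prop :=
  GreenLe a b ∧ GreenLe b a

section CommMonoid

variable {S : Type*} [CommMonoid S] {a b : S}

theorem greenLe_iff_dvd : GreenLe a b ↔ b ∣ a :=
  ⟨by rintro (rfl | h); exacts [dvd_rfl, h], Or.inr⟩

theorem greenEq_iff_dvd_dvd : GreenEq a b ↔ b ∣ a ∧ a ∣ b :=
  and_congr greenLe_iff_dvd greenLe_iff_dvd

theorem stabilizer_subset_of_dvd (h : a ∣ b) :
    {u : Sˣ | (u : S) * a = a} ⊆ {u : Sˣ | (u : S) * b = b} := by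
  rintro u (hu : (u : S) * a = a)
  obtain ⟨c, rfl⟩ := h
  show (u : S) * (a * c) = a * c
  rw [← mul_assoc, hu]

end CommMonoid

theorem exists_one_add_mul_ne_zero_and_add_one {k : Type*} [Field k] (hk : 2 < ENat.card k)
    (x : k) : ∃ t, 1 + x * t ≠ 0 ∧ 1 + x * (t + 1) ≠ 0 := by
  classical
  rcases eq_or_ne x 0 with rfl | hx
  · exact ⟨0, by simp, by simp⟩
  obtain ⟨t, ht⟩ := Finset.exists_not_mem_of_card_lt_enatCard
    (s := {-x⁻¹, -x⁻¹ - 1}) ((Nat.cast_le.2 Finset.card_le_two).trans_lt hk)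
  refine ⟨t, fun h => ht ?_, fun h => ht ?_⟩
  · have : t = -x⁻¹ := by field_simp; linear_combination h
    simp [this]
  · have : t = -x⁻¹ - 1 := by field_simp; linear_combination h
    simp [this]

section CommRing

variable {R : Type*} [CommRing R]

theorem isUnit_of_forall_notMem_maximalSpectrum {r : R}
    (h : ∀ m : MaximalSpectrum R, r ∉ m.asIdeal) : IsUnit r := by
  by_contra hr
  obtain ⟨m, hm, hrm⟩ := exists_max_ideal_of_mem_nonunits hr
  exact h ⟨m, hm⟩ hrm

theorem two_lt_enatCard_quotient_maximal {K : Type*} [Field K] [Algebra K R]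
    (hK : 2 < ENat.card K) (m : MaximalSpectrum R) : 2 < ENat.card (R ⧸ m.asIdeal) :=
  have := m.isMaximal
  hK.trans_le (ENat.card_le_card_of_injective (algebraMap K (R ⧸ m.asIdeal)).injective)

theorem exists_isUnit_one_add_mul_and_add_one [Finite (MaximalSpectrum R)]
    (hR : ∀ m : MaximalSpectrum R, 2 < ENat.card (R ⧸ m.asIdeal)) (x : R) :
    ∃ s, IsUnit (1 + x * s) ∧ IsUnit (1 + x * (s + 1)) := by
  have hlocal : ∀ m : MaximalSpectrum R, ∃ t : R ⧸ m.asIdeal,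
      1 + Ideal.Quotient.mk _ x * t ≠ 0 ∧ 1 + Ideal.Quotient.mk _ x * (t + 1) ≠ 0 := by
    intro m
    have := m.isMaximal
    let _ := Ideal.Quotient.field m.asIdeal
    exact exists_one_add_mul_ne_zero_and_add_one (hR m) _
  choose t ht using hlocal
  have hcop : Pairwise fun m m' : MaximalSpectrum R => IsCoprime m.asIdeal m'.asIdeal :=
    fun m m' hne => Ideal.isCoprime_of_isMaximal (MaximalSpectrum.ext_iff.not.1 hne)
  obtain ⟨s, hs⟩ := Ideal.pi_quotient_surjective hcop t
  refine ⟨s, isUnit_of_forall_notMem_maximalSpectrum fun m h => (ht m).1 ?_,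
    isUnit_of_forall_notMem_maximalSpectrum fun m h => (ht m).2 ?_⟩
  · simpa [← hs m] using Ideal.Quotient.eq_zero_iff_mem.2 h
  · simpa [← hs m] using Ideal.Quotient.eq_zero_iff_mem.2 h

theorem mul_eq_zero_of_stabilizer_subset
    (hR : ∀ x : R, ∃ s, IsUnit (1 + x * s) ∧ IsUnit (1 + x * (s + 1))) {a b : R}
    (h : {u : Rˣ | (u : R) * a = a} ⊆ {u : Rˣ | (u : R) * b = b}) (x : R) (hx : x * a = 0) :
    x * b = 0 := by
  obtain ⟨s, hs, hs'⟩ := hR x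
  have hfix : ∀ y, x ∣ y → IsUnit (1 + y) → (1 + y) * b = b := by
    rintro _ ⟨c, rfl⟩ ⟨u, hu⟩
    rw [← hu]
    exact h (show (u : R) * a = a by rw [hu]; linear_combination c * hx)
  linear_combination hfix _ (dvd_mul_right x (s + 1)) hs' - hfix _ (dvd_mul_right x s) hs

end CommRing

theorem dvd_of_forall_mul_eq_zero_imp {R : Type*} [EuclideanDomain R] {f : R} (hf : f ≠ 0)
    {a b : R ⧸ Ideal.span {f}} (h : ∀ x, x * a = 0 → x * b = 0) : a ∣ b := by
  classical
  set mk := Ideal.Quotient.mk (Ideal.span {f})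
  obtain ⟨A, rfl⟩ := Ideal.Quotient.mk_surjective a
  obtain ⟨B, rfl⟩ := Ideal.Quotient.mk_surjective b
  obtain ⟨A', hA'⟩ := EuclideanDomain.gcd_dvd_left A f
  obtain ⟨k, hk⟩ := EuclideanDomain.gcd_dvd_right A f
  have hk0 : k ≠ 0 := by rintro rfl; exact hf (by simpa using hk)
  have hkA : mk k * mk A = 0 := by
    rw [← map_mul, Ideal.Quotient.eq_zero_iff_mem, Ideal.mem_span_singleton]
    exact ⟨A', by linear_combination k * hA' - A' * hk⟩
  have hkB := h _ hkA
  rw [← map_mul, Ideal.Quotient.eq_zero_iff_mem, Ideal.mem_span_singleton, hk, mul_comm k] at hkB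
  obtain ⟨B', hB'⟩ := (mul_dvd_mul_iff_right hk0).1 hkB
  refine ⟨mk (EuclideanDomain.gcdA A f * B'), ?_⟩
  rw [← map_mul, Ideal.Quotient.mk_eq_mk_iff_sub_mem, Ideal.mem_span_singleton, hB',
    EuclideanDomain.gcd_eq_gcd_ab]
  exact ⟨EuclideanDomain.gcdB A f * B', by ring⟩

theorem greenEq_iff_stabilizer_eq_general (q : ℕ) (hq2 : 2 < q)
    {F : Type*} [Field F] [Fintype F] (hcard : Fintype.card F = q)
    (f : Polynomial F) (hmonic : f.Monic)
    (a b : Polynomial F ⧸ Ideal.span {f}) :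
    GreenEq a b ↔
      {u : (Polynomial F ⧸ Ideal.span {f})ˣ | (u : Polynomial F ⧸ Ideal.span {f}) * a = a}
        = {u : (Polynomial F ⧸ Ideal.span {f})ˣ |
            (u : Polynomial F ⧸ Ideal.span {f}) * b = b} := by
  have : Module.Finite F (F[X] ⧸ Ideal.span {f}) := hmonic.finite_quotient
  have : IsArtinianRing (F[X] ⧸ Ideal.span {f}) := .of_finite F _
  have hF : 2 < ENat.card F := by rw [ENat.card_eq_coe_fintype_card, hcard]; exact_mod_cast hq2
  have hunits := exists_isUnit_one_add_mul_and_add_one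
    (two_lt_enatCard_quotient_maximal (R := F[X] ⧸ Ideal.span {f}) hF)
  rw [greenEq_iff_dvd_dvd]
  constructor
  · rintro ⟨hba, hab⟩
    exact (stabilizer_subset_of_dvd hab).antisymm (stabilizer_subset_of_dvd hba)
  · intro h
    have hf := hmonic.ne_zero
    exact ⟨dvd_of_forall_mul_eq_zero_imp hf (mul_eq_zero_of_stabilizer_subset hunits h.ge),
      dvd_of_forall_mul_eq_zero_imp hf (mul_eq_zero_of_stabilizer_subset hunits h.le)⟩

/-- Let `q > 2` be a prime power, `F` the finite field with `q` elements, `f` a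
nonconstant monic polynomial over `F`, and `R = F[x]/(f)`.  For `a, b ∈ R`, one has
`a H b` in the Green's congruence of the multiplicative monoid of `R` if and only if
`St_U(a) = St_U(b)`, where `U` is the group of units of `R` and
`St_U(c) = {u ∈ U : u·c = c}`. -/
theorem greenEq_iff_stabilizer_eq (q : ℕ) (hq : IsPrimePow q) (hq2 : 2 < q)
    {F : Type*} [Field F] [Fintype F] (hcard : Fintype.card F = q)
    (f : Polynomial F) (hmonic : f.Monic) (hdeg : 0 < f.degree)
    (a b : Polynomial F ⧸ Ideal.span {f}) :
    GreenEq a b ↔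
      {u : (Polynomial F ⧸ Ideal.span {f})ˣ | (u : Polynomial F ⧸ Ideal.span {f}) * a = a}
        = {u : (Polynomial F ⧸ Ideal.span {f})ˣ |
            (u : Polynomial F ⧸ Ideal.span {f}) * b = b} :=
  greenEq_iff_stabilizer_eq_general q hq2 hcard f hmonic a b
end

section
/- For any prime p > 2, let f ∈ F_p[x] be a nonconstant polynomial that factors into a product of pairwise non-associate irreducible polynomials (i.e., f is squarefree), and let R = F_p[x]/(f). Then D(S_R) = D(U(S_R)), where S_R denotes the multiplicative semigroup of R and U(S_R) its group of units. -/
/-- A sequence (finite multiset) `T` over a commutative semigroup with identity is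
reducible if it has a proper subsequence whose product equals the product of `T`. -/
def MulReducible {M : Type*} [CommMonoid M] (T : Multiset M) : Prop :=
  ∃ T' : Multiset M, T' ≤ T ∧ T' ≠ T ∧ T'.prod = T.prod

/-- The Davenport constant of a commutative semigroup with identity: the least positive
integer `ℓ` such that every sequence of length at least `ℓ` is reducible. -/
noncomputable def Davenport (M : Type*) [CommMonoid M] : ℕ :=
  sInf {n : ℕ | 1 ≤ n ∧ ∀ T : Multiset M, n ≤ Multiset.card T → MulReducible T}

/-!
Since `f` is squarefree, `R = F_p[x]/(f)` is a finite reduced ring, hence a finite product of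
finite fields `F_i`, each with at least `p ≥ 3` elements. Units embed into `R`, so
`D(Rˣ) ≤ D(R)`. Conversely, let `T` have length at least `D(Rˣ)` and let `Z` be the set of
coordinates at which its product vanishes. Set aside one term vanishing at each coordinate of
`Z`. A nonreducible sequence over `∏_{i ∉ Z} F_iˣ`, extended by one nontrivial unit placed at each
coordinate of `Z`, stays nonreducible, so `D(∏_{i ∉ Z} F_iˣ) + |Z| ≤ D(Rˣ)`. The remaining terms
of `T` are units off `Z`, so they contain a proper subsequence with the same product off `Z`;
adding back the set-aside terms, which already make every coordinate in `Z` vanish, reduces `T`.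
-/

theorem Multiset.exists_le_map_eq_of_le_map {α β : Type*} {f : α → β} {T : Multiset α}
    {V : Multiset β} (h : V ≤ T.map f) : ∃ U ≤ T, U.map f = V := by
  induction T using Quotient.inductionOn
  induction V using Quotient.inductionOn
  obtain ⟨l, hperm, hsub⟩ := h
  obtain ⟨l', hl', rfl⟩ := List.sublist_map_iff.mp hsub
  exact ⟨l', hl'.subperm, Quotient.sound hperm⟩

theorem Multiset.exists_add_eq_of_le_add {α : Type*} [DecidableEq α] {U A B : Multiset α}
    (h : U ≤ A + B) : ∃ A' ≤ A, ∃ B' ≤ B, A' + B' = U := by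
  refine ⟨U ∩ A, Multiset.inter_le_right, U - U ∩ A, ?_,
    add_tsub_cancel_of_le Multiset.inter_le_left⟩
  rw [Multiset.le_iff_count] at h ⊢
  intro x
  have := h x
  simp only [Multiset.count_sub, Multiset.count_inter, Multiset.count_add] at this ⊢
  omega

section Reducible

variable {M N : Type*} [CommMonoid M] [CommMonoid N]

theorem not_mulReducible_zero : ¬ MulReducible (0 : Multiset M) := by
  rintro ⟨T', hle, hne, -⟩
  exact hne (Multiset.le_zero.mp hle)

theorem MulReducible.map {T : Multiset M} (f : M →* N) (h : MulReducible T) :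
    MulReducible (T.map f) := by
  obtain ⟨U, hle, hne, hprod⟩ := h
  refine ⟨U.map f, Multiset.map_le_map hle, fun h => hne ?_, by
    rw [Multiset.prod_hom, Multiset.prod_hom, hprod]⟩
  exact Multiset.eq_of_le_of_card_le hle (by simpa using (congrArg Multiset.card h).ge)

theorem MulReducible.of_map {T : Multiset M} {f : M →* N} (hf : Function.Injective f)
    (h : MulReducible (T.map f)) : MulReducible T := by
  obtain ⟨V, hle, hne, hprod⟩ := h
  obtain ⟨U, hU, rfl⟩ := Multiset.exists_le_map_eq_of_le_map hle
  refine ⟨U, hU, by rintro rfl; exact hne rfl, hf ?_⟩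
  rwa [← Multiset.prod_hom, ← Multiset.prod_hom]

/-- Pigeonhole on the prefix products: two equal ones let us drop the terms between them. -/
theorem mulReducible_of_card_le [Fintype M] {T : Multiset M}
    (h : Fintype.card M ≤ Multiset.card T) : MulReducible T := by
  obtain ⟨l, rfl⟩ := Quotient.exists_rep T
  replace h : Fintype.card M < Fintype.card (Fin (l.length + 1)) := by
    simpa [Nat.lt_succ_iff] using h
  obtain ⟨i, j, hij, hprod⟩ :=
    Fintype.exists_ne_map_eq_of_card_lt (fun k : Fin (l.length + 1) => (l.take k).prod) h
  wlog hlt : (i : ℕ) < j generalizing i j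
  · exact this j i hij.symm hprod.symm (by omega)
  have hsub : (l.take i ++ l.drop j).Sublist l := by
    conv_rhs => rw [← List.take_append_drop j l]
    exact (List.take_sublist_take_left hlt.le).append (List.Sublist.refl _)
  refine ⟨(l.take i ++ l.drop j : List M), hsub.subperm, fun h => ?_, ?_⟩
  · have := congrArg Multiset.card h
    simp only [Multiset.quot_mk_to_coe, Multiset.coe_card, List.length_append, List.length_take,
      List.length_drop] at this
    omega
  · change (l.take i ++ l.drop j).prod = l.prod
    conv_rhs => rw [← List.take_append_drop j l]
    simp only [List.prod_append, hprod]

end Reducible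

section Davenport

variable {M N : Type*} [CommMonoid M] [CommMonoid N]

theorem davenport_le {n : ℕ} (hn : 1 ≤ n)
    (h : ∀ T : Multiset M, n ≤ Multiset.card T → MulReducible T) : Davenport M ≤ n :=
  Nat.sInf_le ⟨hn, h⟩

theorem davenport_spec [Finite M] :
    1 ≤ Davenport M ∧ ∀ T : Multiset M, Davenport M ≤ Multiset.card T → MulReducible T := by
  have := Fintype.ofFinite M
  exact Nat.sInf_mem
    (s := {n : ℕ | 1 ≤ n ∧ ∀ T : Multiset M, n ≤ Multiset.card T → MulReducible T})
    ⟨Fintype.card M, Fintype.card_pos, fun T hT => mulReducible_of_card_le hT⟩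

theorem one_le_davenport [Finite M] : 1 ≤ Davenport M := davenport_spec.1

theorem mulReducible_of_davenport_le_card [Finite M] {T : Multiset M}
    (h : Davenport M ≤ Multiset.card T) : MulReducible T :=
  davenport_spec.2 T h

theorem card_lt_davenport_of_not_mulReducible [Finite M] {T : Multiset M}
    (h : ¬ MulReducible T) : Multiset.card T < Davenport M :=
  lt_of_not_ge fun hT => h (mulReducible_of_davenport_le_card hT)

theorem exists_not_mulReducible_card_add_one_eq [Finite M] :
    ∃ T : Multiset M, ¬ MulReducible T ∧ Multiset.card T + 1 = Davenport M := by
  obtain h | h := (one_le_davenport (M := M)).eq_or_lt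
  · exact ⟨0, not_mulReducible_zero, by simp [h]⟩
  have hnot : Davenport M - 1 ∉
      {n : ℕ | 1 ≤ n ∧ ∀ T : Multiset M, n ≤ Multiset.card T → MulReducible T} :=
    Nat.notMem_of_lt_sInf (by unfold Davenport at h ⊢; omega)
  simp only [Set.mem_ofPred_eq, not_and, not_forall] at hnot
  obtain ⟨T, hT, hnr⟩ := hnot (by omega)
  have := card_lt_davenport_of_not_mulReducible hnr
  exact ⟨T, hnr, by omega⟩

theorem davenport_le_of_injective [Finite N] (f : M →* N) (hf : Function.Injective f) :
    Davenport M ≤ Davenport N :=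
  davenport_le one_le_davenport fun T hT =>
    (mulReducible_of_davenport_le_card (by simpa using hT)).of_map hf

theorem davenport_congr [Finite M] [Finite N] (e : M ≃* N) : Davenport M = Davenport N :=
  (davenport_le_of_injective e.toMonoidHom e.injective).antisymm
    (davenport_le_of_injective e.symm.toMonoidHom e.symm.injective)

theorem davenport_units_le [Finite M] : Davenport Mˣ ≤ Davenport M :=
  davenport_le_of_injective (Units.coeHom M) Units.val_injective

theorem mulReducible_of_forall_isUnit [Finite M] {T : Multiset M} (hT : ∀ x ∈ T, IsUnit x)
    (h : Davenport Mˣ ≤ Multiset.card T) : MulReducible T := by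
  lift T to Multiset Mˣ using hT
  exact (mulReducible_of_davenport_le_card (by simpa using h)).map (Units.coeHom M)

end Davenport

section Product

variable {M N : Type*} [CommMonoid M] [CommMonoid N]

theorem not_mulReducible_map_inl_add_map_inr {W : Multiset M} {X : Multiset N}
    (hW : ¬ MulReducible W) (hX : ¬ MulReducible X) :
    ¬ MulReducible (W.map (MonoidHom.inl M N) + X.map (MonoidHom.inr M N)) := by
  classical
  have hprod : ∀ (A : Multiset M) (B : Multiset N),
      (A.map (MonoidHom.inl M N) + B.map (MonoidHom.inr M N)).prod = (A.prod, B.prod) := by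
    intro A B
    simp [Multiset.prod_add, Multiset.prod_hom]
  rintro ⟨U, hle, hne, hUprod⟩
  obtain ⟨A', hA', B', hB', rfl⟩ := Multiset.exists_add_eq_of_le_add hle
  obtain ⟨A, hA, rfl⟩ := Multiset.exists_le_map_eq_of_le_map hA'
  obtain ⟨B, hB, rfl⟩ := Multiset.exists_le_map_eq_of_le_map hB'
  rw [hprod, hprod, Prod.mk.injEq] at hUprod
  obtain rfl : A = W := by_contra fun h => hW ⟨A, hA, h, hUprod.1⟩
  obtain rfl : B = X := by_contra fun h => hX ⟨B, hB, h, hUprod.2⟩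
  exact hne rfl

theorem davenport_add_davenport_le_davenport_prod [Finite M] [Finite N] :
    Davenport M + Davenport N ≤ Davenport (M × N) + 1 := by
  obtain ⟨W, hW, hWcard⟩ := exists_not_mulReducible_card_add_one_eq (M := M)
  obtain ⟨X, hX, hXcard⟩ := exists_not_mulReducible_card_add_one_eq (M := N)
  have := card_lt_davenport_of_not_mulReducible (not_mulReducible_map_inl_add_map_inr hW hX)
  simp only [Multiset.card_add, Multiset.card_map] at this
  omega

end Product

section Pi

variable {ι : Type*} {G : ι → Type*} [∀ i, CommMonoid (G i)]

theorem not_mulReducible_mulSingle [Fintype ι] [DecidableEq ι] {c : ∀ i, G i}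
    (hc : ∀ i, c i ≠ 1) :
    ¬ MulReducible (Finset.univ.val.map fun i => Pi.mulSingle i (c i)) := by
  rintro ⟨U, hle, hne, hprod⟩
  obtain ⟨s, hs, rfl⟩ := Multiset.exists_le_map_eq_of_le_map hle
  lift s to Finset ι using Multiset.nodup_of_le hs Finset.univ.nodup
  refine hne (congrArg _ (Finset.val_inj.mpr (Finset.eq_univ_of_forall fun i => ?_)))
  have hi := congrFun hprod i
  simp only [← Finset.prod_eq_multiset_prod, Finset.prod_apply, Finset.prod_pi_mulSingle,
    Finset.mem_univ, if_true] at hi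
  by_contra his
  rw [if_neg his] at hi
  exact hc i hi.symm

theorem card_lt_davenport_pi [Finite ι] [∀ i, Finite (G i)] [∀ i, Nontrivial (G i)] :
    Nat.card ι < Davenport (∀ i, G i) := by
  classical
  have := Fintype.ofFinite ι
  choose c hc using fun i => exists_ne (1 : G i)
  simpa using card_lt_davenport_of_not_mulReducible (not_mulReducible_mulSingle hc)

def MulEquiv.piEquivPiSubtypeProd (p : ι → Prop) [DecidablePred p] (G : ι → Type*)
    [∀ i, Monoid (G i)] : (∀ i, G i) ≃* (∀ i : {i // p i}, G i) × (∀ i : {i // ¬ p i}, G i) :=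
  { Equiv.piEquivPiSubtypeProd p G with map_mul' := fun _ _ => rfl }

theorem davenport_pi_subtype_add_card_le [Finite ι] [∀ i, Finite (G i)]
    [∀ i, Nontrivial (G i)] (p : ι → Prop) :
    Davenport (∀ i : {i // ¬ p i}, G i) + Nat.card {i // p i} ≤ Davenport (∀ i, G i) := by
  classical
  rw [davenport_congr (MulEquiv.piEquivPiSubtypeProd p G)]
  have := davenport_add_davenport_le_davenport_prod
    (M := ∀ i : {i // p i}, G i) (N := ∀ i : {i // ¬ p i}, G i)
  have := card_lt_davenport_pi (G := fun i : {i // p i} => G i)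
  omega

end Pi

section MonoidWithZero

variable {ι : Type*} {F : ι → Type*} [∀ i, CommMonoidWithZero (F i)] [∀ i, NoZeroDivisors (F i)]
  [∀ i, Nontrivial (F i)]

theorem Pi.multiset_prod_apply_eq_zero_iff (T : Multiset (∀ i, F i)) (i : ι) :
    T.prod i = 0 ↔ ∃ a ∈ T, a i = 0 := by
  simp [Pi.multiset_prod_apply]

theorem exists_le_card_le_forall_prod_apply_eq_zero [Finite ι] (T : Multiset (∀ i, F i)) :
    ∃ T₀ ≤ T, Multiset.card T₀ ≤ Nat.card {i // T.prod i = 0} ∧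
      ∀ i, T.prod i = 0 → T₀.prod i = 0 := by
  classical
  have := Fintype.ofFinite ι
  choose a haT ha0 using
    fun i : {i // T.prod i = 0} => (Pi.multiset_prod_apply_eq_zero_iff T i).mp i.2
  refine ⟨(Finset.univ.image a).val, ?_,
    Nat.card_eq_fintype_card (α := {i // T.prod i = 0}) ▸ Finset.card_image_le, fun i hi => ?_⟩
  · refine (Multiset.le_iff_subset (Finset.nodup _)).mpr fun x hx => ?_
    obtain ⟨i, -, rfl⟩ := Finset.mem_image.mp hx
    exact haT i
  · exact (Pi.multiset_prod_apply_eq_zero_iff _ i).mpr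
      ⟨a ⟨i, hi⟩, by simp, ha0 ⟨i, hi⟩⟩

end MonoidWithZero

theorem davenport_pi_le_davenport_units {ι : Type*} {F : ι → Type*}
    [∀ i, CommGroupWithZero (F i)] [Finite ι] [∀ i, Finite (F i)] [∀ i, Nontrivial (F i)ˣ] :
    Davenport (∀ i, F i) ≤ Davenport (∀ i, F i)ˣ := by
  classical
  refine davenport_le one_le_davenport fun T hT => ?_
  obtain ⟨T₀, hT₀, hT₀card, hT₀zero⟩ := exists_le_card_le_forall_prod_apply_eq_zero T
  set p : ι → Prop := fun i => T.prod i = 0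
  have hD :
      Davenport (∀ i : {i // ¬ p i}, F i)ˣ + Nat.card (Subtype p) ≤ Multiset.card T := by
    rw [davenport_congr (MulEquiv.piUnits (M := fun i : {i // ¬ p i} => F i))]
    rw [davenport_congr MulEquiv.piUnits] at hT
    exact (davenport_pi_subtype_add_card_le p).trans hT
  obtain ⟨T₁, hT⟩ := Multiset.le_iff_exists_add.mp hT₀
  set ρ := (MonoidHom.snd _ _).comp (MulEquiv.piEquivPiSubtypeProd p F).toMonoidHom
  have hunit : ∀ x ∈ T₁.map ρ, IsUnit x := by
    simp only [Multiset.mem_map]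
    rintro _ ⟨y, hy, rfl⟩
    refine Pi.isUnit_iff.mpr fun i => isUnit_iff_ne_zero.mpr fun hyi => i.2 ?_
    exact (Pi.multiset_prod_apply_eq_zero_iff T i).mpr
      ⟨y, hT ▸ Multiset.mem_add.mpr (.inr hy), hyi⟩
  obtain ⟨V, hVle, hVne, hVprod⟩ := mulReducible_of_forall_isUnit hunit (by
    rw [Multiset.card_map]; rw [hT, Multiset.card_add] at hD; omega)
  obtain ⟨U, hU, rfl⟩ := Multiset.exists_le_map_eq_of_le_map hVle
  refine ⟨T₀ + U, hT ▸ add_le_add le_rfl hU,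
    fun h => hVne (by rw [add_left_cancel (h.trans hT)]), funext fun i => ?_⟩
  by_cases hi : p i
  · rw [hi, Multiset.prod_add, Pi.mul_apply, hT₀zero i hi, zero_mul]
  · rw [Multiset.prod_hom, Multiset.prod_hom] at hVprod
    have hUi : U.prod i = T₁.prod i := congrFun hVprod ⟨i, hi⟩
    rw [hT, Multiset.prod_add, Multiset.prod_add, Pi.mul_apply, Pi.mul_apply, hUi]

theorem davenport_eq_davenport_units_of_isReduced {R : Type*} [CommRing R] [Finite R]
    [IsReduced R] (hcard : ∀ I : Ideal R, I.IsMaximal → 2 < Nat.card (R ⧸ I)) :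
    Davenport R = Davenport Rˣ := by
  refine le_antisymm ?_ davenport_units_le
  have : IsArtinianRing R := isArtinian_of_finite
  have (I : MaximalSpectrum R) : Finite (R ⧸ I.asIdeal) :=
    Finite.of_surjective _ Ideal.Quotient.mk_surjective
  let e := (IsArtinianRing.equivPi R).toRingEquiv.toMulEquiv
  rw [davenport_congr e, davenport_congr (Units.mapEquiv e)]
  let (I : MaximalSpectrum R) : Field (R ⧸ I.asIdeal) := Ideal.Quotient.field I.asIdeal
  have (I : MaximalSpectrum R) : Nontrivial (R ⧸ I.asIdeal)ˣ := by
    rw [← Finite.one_lt_card_iff_nontrivial, Nat.card_units]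
    have := hcard I.asIdeal I.isMaximal
    omega
  exact davenport_pi_le_davenport_units

theorem davenport_quotient_squarefree_general (p : ℕ) (hp : p.Prime) (hp2 : 2 < p)
    (f : Polynomial (ZMod p)) (hsf : Squarefree f) :
    Davenport (Polynomial (ZMod p) ⧸ Ideal.span {f}) =
      Davenport ((Polynomial (ZMod p) ⧸ Ideal.span {f})ˣ) := by
  have : Fact p.Prime := ⟨hp⟩
  have : Finite (Polynomial (ZMod p) ⧸ Ideal.span {f}) :=
    have := (AdjoinRoot.powerBasis hsf.ne_zero).finite
    Module.finite_of_finite (ZMod p) (M := AdjoinRoot f)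
  have : IsReduced (Polynomial (ZMod p) ⧸ Ideal.span {f}) :=
    (Ideal.isRadical_iff_quotient_reduced _).mp (isRadical_iff_span_singleton.mp hsf.isRadical)
  refine davenport_eq_davenport_units_of_isReduced fun I hI => ?_
  have : Nontrivial (_ ⧸ I) := Ideal.Quotient.nontrivial_iff.mpr hI.ne_top
  have : Finite (_ ⧸ I) := Finite.of_surjective _ Ideal.Quotient.mk_surjective
  calc 2 < p := hp2
    _ = Nat.card (ZMod p) := (Nat.card_zmod p).symm
    _ ≤ Nat.card (_ ⧸ I) :=
      Nat.card_le_card_of_injective _ (algebraMap (ZMod p) (_ ⧸ I)).injective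

/-- For a prime `p > 2` and a nonconstant squarefree polynomial `f ∈ F_p[x]`
(i.e. `f` is a product of pairwise non-associate irreducible polynomials), the
multiplicative semigroup `S_R` of `R = F_p[x]/(f)` satisfies `D(S_R) = D(U(S_R))`. -/
theorem davenport_quotient_squarefree (p : ℕ) (hp : p.Prime) (hp2 : 2 < p)
    (f : Polynomial (ZMod p)) (hdeg : 0 < f.degree) (hsf : Squarefree f) :
    Davenport (Polynomial (ZMod p) ⧸ Ideal.span {f}) =
      Davenport ((Polynomial (ZMod p) ⧸ Ideal.span {f})ˣ) :=
  davenport_quotient_squarefree_general p hp hp2 f hsf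
end

section
/- Every sequence of 2n − 1 elements in an additive finite abelian group of order n contains a zero-sum subsequence of length exactly n (Erdős–Ginzburg–Ziv theorem for finite abelian groups). -/
/-!
The Erdős–Ginzburg–Ziv property is multiplicative along subgroups: for `H ≤ G`, in a sequence
of length `2|G| - 1` the property of `G ⧸ H` extracts one after another `2|H| - 1` disjoint
blocks of length `|G ⧸ H|` whose sums lie in `H`, and the property of `H` then selects `|H|` of
these blocks with total sum `0`. Taking for `H` a subgroup of prime order (Cauchy) and inducting
on `|G|` reduces the theorem to cyclic groups, i.e. to `ZMod n`, where it is Mathlib's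
`ZMod.erdos_ginzburg_ziv_multiset`.
-/

open Multiset

theorem Multiset.exists_le_map_eq_of_le_map_s15 {α β : Type*} {f : α → β} {s : Multiset α}
    {t : Multiset β} (h : t ≤ s.map f) : ∃ u ≤ s, u.map f = t := by
  induction s using Quotient.inductionOn
  induction t using Quotient.inductionOn with
  | h l =>
  obtain ⟨l', hl'l, hl'⟩ := h
  obtain ⟨u, hu, rfl⟩ := List.sublist_map_iff.1 hl'
  exact ⟨u, hu.subperm, coe_eq_coe.2 hl'l⟩

theorem Multiset.exists_join_le_of_forall_exists_le {α : Type*} {P : Multiset α → Prop} {m : ℕ}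
    (hP : ∀ s : Multiset α, 2 * m - 1 ≤ card s → ∃ t ≤ s, card t = m ∧ P t) (k : ℕ)
    {s : Multiset α} (hs : k * m + (m - 1) ≤ card s) :
    ∃ C : Multiset (Multiset α), card C = k ∧ C.join ≤ s ∧ ∀ t ∈ C, card t = m ∧ P t := by
  induction k generalizing s with
  | zero => exact ⟨0, by simp⟩
  | succ k ih =>
    rw [Nat.succ_mul] at hs
    obtain ⟨t, hts, htm, ht⟩ := hP s (by omega)
    obtain ⟨r, rfl⟩ := le_iff_exists_add.1 hts
    obtain ⟨C, hCk, hCr, hC⟩ := ih (s := r) (by rw [card_add] at hs; omega)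
    refine ⟨t ::ₘ C, by simp [hCk], by simpa using hCr, ?_⟩
    simpa [forall_mem_cons] using ⟨⟨htm, ht⟩, hC⟩

def EGZ (G : Type*) [AddCommMonoid G] (n : ℕ) : Prop :=
  ∀ s : Multiset G, 2 * n - 1 ≤ card s → ∃ t ≤ s, card t = n ∧ t.sum = 0

namespace EGZ

section

variable {G K : Type*} [AddCommMonoid G] [AddCommMonoid K]

theorem exists_le_map_sum_eq_zero {n : ℕ} (hK : EGZ K n) (f : G →+ K) {s : Multiset G}
    (hs : 2 * n - 1 ≤ card s) : ∃ t ≤ s, card t = n ∧ f t.sum = 0 := by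
  obtain ⟨u, hus, hun, hu⟩ := hK (s.map f) (by rwa [card_map])
  obtain ⟨t, hts, rfl⟩ := exists_le_map_eq_of_le_map_s15 hus
  exact ⟨t, hts, by rwa [card_map] at hun, by rwa [map_multiset_sum]⟩

theorem zero : EGZ G 0 := fun s _ ↦ ⟨0, zero_le s, card_zero, sum_zero⟩

end

section

variable {G : Type*} [AddCommGroup G]

theorem zmod (n : ℕ) : EGZ (ZMod n) n := fun s ↦ ZMod.erdos_ginzburg_ziv_multiset s

theorem of_isAddCyclic [IsAddCyclic G] : EGZ G (Nat.card G) := fun _ hs ↦ by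
  simpa using (zmod _).exists_le_map_sum_eq_zero (zmodAddCyclicAddEquiv ‹_›).symm.toAddMonoidHom hs

theorem exists_le_of_forall_mem {n : ℕ} {H : AddSubgroup G} (hH : EGZ H n) {s : Multiset G}
    (hsH : ∀ x ∈ s, x ∈ H) (hs : 2 * n - 1 ≤ card s) : ∃ t ≤ s, card t = n ∧ t.sum = 0 := by
  obtain ⟨u, hus, hun, hu⟩ := hH (s.pmap (fun x hx ↦ (⟨x, hx⟩ : H)) hsH) (by simpa using hs)
  refine ⟨u.map H.subtype, ?_, by rwa [card_map], by rw [← map_multiset_sum, hu, _root_.map_zero]⟩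
  calc u.map H.subtype ≤ (s.pmap _ hsH).map H.subtype := map_le_map hus
    _ = s := by simp [map_pmap, pmap_eq_map]

theorem of_addSubgroup (H : AddSubgroup G) {p m : ℕ} (hH : EGZ H p) (hQ : EGZ (G ⧸ H) m) :
    EGZ G (m * p) := by
  by_cases h0 : m * p = 0
  · rw [h0]; exact zero
  have hm : 0 < m := Nat.pos_of_ne_zero (left_ne_zero_of_mul h0)
  have hp : 0 < p := Nat.pos_of_ne_zero (right_ne_zero_of_mul h0)
  intro s hs
  have hblocks : (2 * p - 1) * m + (m - 1) ≤ card s := by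
    have : (2 * p - 1) * m + m = 2 * (m * p) := by
      rw [Nat.sub_mul, one_mul, Nat.sub_add_cancel (by nlinarith)]; ring
    omega
  obtain ⟨C, hCcard, hCs, hC⟩ := exists_join_le_of_forall_exists_le
    (fun _ ↦ by simpa using hQ.exists_le_map_sum_eq_zero (QuotientAddGroup.mk' H)) _ hblocks
  obtain ⟨u, huC, hup, hu⟩ := hH.exists_le_of_forall_mem (s := C.map Multiset.sum)
    (forall_mem_map_iff.2 fun t ht ↦ (hC t ht).2) (by simp [hCcard])
  obtain ⟨D, hDC, rfl⟩ := exists_le_map_eq_of_le_map_s15 huC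
  obtain ⟨E, rfl⟩ := Multiset.le_iff_exists_add.1 hDC
  refine ⟨D.join, le_of_add_le_left (by simpa using hCs), ?_, by simpa using hu⟩
  rw [card_join, map_congr rfl fun t ht ↦ (hC t (mem_add.2 (.inl ht))).1, map_const', sum_replicate,
    smul_eq_mul, ← hup, card_map, mul_comm]

end

theorem of_finite (G : Type*) [AddCommGroup G] [Finite G] : EGZ G (Nat.card G) := by
  induction h : Nat.card G using Nat.strong_induction_on generalizing G with
  | _ n ih =>
  subst h
  rcases subsingleton_or_nontrivial G with hG | hG
  · exact of_isAddCyclic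
  obtain ⟨p, hp, hpG⟩ := Nat.exists_prime_and_dvd (Finite.one_lt_card_iff_nontrivial.2 hG).ne'
  have := Fact.mk hp
  obtain ⟨g, hg⟩ := exists_prime_addOrderOf_dvd_card' p hpG
  set H := AddSubgroup.zmultiples g
  have hH : Nat.card H = p := by rw [Nat.card_zmultiples, hg]
  have hcard : Nat.card G = Nat.card (G ⧸ H) * Nat.card H :=
    H.card_eq_card_quotient_mul_card_addSubgroup
  have hlt : Nat.card (G ⧸ H) < Nat.card G := by
    rw [hcard, hH]
    exact lt_mul_of_one_lt_right Nat.card_pos hp.one_lt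
  rw [hcard]
  exact of_addSubgroup H of_isAddCyclic (ih _ hlt _ rfl)

end EGZ

/-- Erdős–Ginzburg–Ziv theorem for finite abelian groups: every sequence (finite
multiset) of `2n − 1` elements in an additive finite abelian group of order `n` contains
a zero-sum subsequence of length exactly `n`. -/
theorem erdos_ginzburg_ziv {G : Type*} [AddCommGroup G] [Fintype G]
    (n : ℕ) (hn : Fintype.card G = n)
    (T : Multiset G) (hT : Multiset.card T = 2 * n - 1) :
    ∃ T' : Multiset G, T' ≤ T ∧ Multiset.card T' = n ∧ T'.sum = 0 := by
  rw [← hn, ← Nat.card_eq_fintype_card] at hT ⊢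
  exact EGZ.of_finite G T hT.ge
end
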